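/- arXiv:1412.0320 — 2 statements merged into one kernel-verified Lean document; each statement's English description precedes it below -/
import Mathlib

section
/- If a canonical program Π over a finite variable set V has no loops, then Π is equivalent to its completion: Ans(Π) = M(Comp(Π)). -/
/-- A rule element: ⊤, ⊥, a variable `x`, `not x`, or `not not x`.
Variables are indexed by natural numbers; the variable `x_i` of the paper is index `i - 1`. -/
inductive RuleElem : Type
  | top : RuleElem
  | bot : RuleElem
  | pos : ℕ → RuleElem
  | neg : ℕ → RuleElem
  | negneg : ℕ → RuleElem
  deriving DecidableEq

/-- A rule `H ← B`: the head is a variable (`some x`) or ⊥ (`none`);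
the body is a finite set of rule elements. -/
structure Rule : Type where
  head : Option ℕ
  body : Finset RuleElem
  deriving DecidableEq

/-- A canonical program is a finite set of rules. -/
abbrev Program : Type := Finset Rule

/-- Satisfaction of a rule element by a set of variables. -/
def satElem (I : Set ℕ) : RuleElem → Prop
  | .top => True
  | .bot => False
  | .pos x => x ∈ I
  | .neg x => x ∉ I
  | .negneg x => x ∈ I

/-- `I ⊨ B`: `I` satisfies every element of the body `B`. -/
def satBody (I : Set ℕ) (B : Finset RuleElem) : Prop := ∀ e ∈ B, satElem I e

/-- `J` is closed under the program `Π`: for every rule `H ← B` with `J ⊨ B`,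
the head is a variable belonging to `J`. -/
def closedUnder (J : Set ℕ) (P : Program) : Prop :=
  ∀ r ∈ P, satBody J r.body → ∃ x, r.head = some x ∧ x ∈ J

/-- `Cn P`: the least set of variables closed under `P` (used for basic programs). -/
def Cn (P : Program) : Set ℕ := ⋂₀ {J : Set ℕ | closedUnder J P}

/-- The reduction of a rule element with respect to `I`. -/
def reduceElem (I : Finset ℕ) : RuleElem → RuleElem
  | .negneg x => if x ∈ I then .top else .bot
  | .neg x => if x ∈ I then .bot else .top
  | e => e

/-- The reduct `P^I` of a canonical program. -/
def reduct (P : Program) (I : Finset ℕ) : Program :=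
  P.image (fun r => ⟨r.head, r.body.image (reduceElem I)⟩)

/-- `I` is an answer set of `P` iff `I = Cn(P^I)`. -/
def isAnswerSet (P : Program) (I : Finset ℕ) : Prop :=
  (I : Set ℕ) = Cn (reduct P I)

/-- The variables occurring in a rule element. -/
def elemVars : RuleElem → Finset ℕ
  | .top => ∅
  | .bot => ∅
  | .pos x => {x}
  | .neg x => {x}
  | .negneg x => {x}

/-- The variables occurring in a rule. -/
def ruleVars (r : Rule) : Finset ℕ :=
  (r.head.elim ∅ fun x => {x}) ∪ r.body.biUnion elemVars

/-- The variables occurring in a program. -/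
def progVars (P : Program) : Finset ℕ := P.biUnion ruleVars

/-- A program is normal if no `not not x` occurs in it. -/
def isNormal (P : Program) : Prop := ∀ r ∈ P, ∀ x, RuleElem.negneg x ∉ r.body

/-- `P` is a PARITY_n program: all its variables are among `{x_1, …, x_n}`
(indices `0, …, n-1`) and its answer sets, as subsets of `{x_1, …, x_n}`,
are exactly the subsets of odd cardinality. -/
def isParityProgram (n : ℕ) (P : Program) : Prop :=
  progVars P ⊆ Finset.range n ∧
  ∀ I : Finset ℕ, isAnswerSet P I ↔ (I ⊆ Finset.range n ∧ Odd I.card)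

/-- `M(Comp(P))`, the models (subsets of `V`) of the completion of `P` over `V`:
for each variable `x ∈ V`, `x` holds iff the body of some rule with head `x` is
(classically) satisfied; and the body of no rule with head ⊥ is satisfied.
(The classical reading of `not` coincides with `satElem`.) -/
def compModels (V : Finset ℕ) (P : Program) : Set (Finset ℕ) :=
  {I | I ⊆ V ∧
    (∀ x ∈ V, (x ∈ I ↔ ∃ r ∈ P, r.head = some x ∧ satBody (↑I) r.body)) ∧
    ∀ r ∈ P, r.head = none → ¬ satBody (↑I) r.body}

/-- The dependency graph of `P` has an edge `(x, y)` iff some rule `x ← B` of `P`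
has `y ∈ var(B)`. -/
def depEdge (P : Program) (x y : ℕ) : Prop :=
  ∃ r ∈ P, r.head = some x ∧ RuleElem.pos y ∈ r.body

/-- `U` is a loop of `P`: a nonempty set of variables of `P` which is either a
singleton `{x}` with an edge `(x, x)`, or has at least two elements and induces a
strongly connected subgraph of the dependency graph. -/
def isLoop (P : Program) (U : Finset ℕ) : Prop :=
  U.Nonempty ∧ U ⊆ progVars P ∧
    ((∃ x, U = {x} ∧ depEdge P x x) ∨
      (2 ≤ U.card ∧ ∀ x ∈ U, ∀ y ∈ U,
        Relation.ReflTransGen (fun a b => a ∈ U ∧ b ∈ U ∧ depEdge P a b) x y))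

/-- `I` satisfies all loop formulas of `P`: for every loop `U`, if the body of no rule
in `R⁻(U, P)` is satisfied by `I`, then no variable of `U` is in `I`. -/
def satLoopFormulas (P : Program) (I : Finset ℕ) : Prop :=
  ∀ U : Finset ℕ, isLoop P U →
    (¬ ∃ r ∈ P, (∃ x ∈ U, r.head = some x) ∧ (∀ y ∈ U, RuleElem.pos y ∉ r.body) ∧
        satBody (↑I) r.body) →
    ∀ x ∈ U, x ∉ I

section Aux

open Relation

lemma satElem_reduce_self (I : Finset ℕ) (e : RuleElem) :
    satElem ↑I (reduceElem I e) ↔ satElem ↑I e := by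
  cases e with
  | top => rfl
  | bot => rfl
  | pos x => rfl
  | neg x => by_cases h : x ∈ I <;> simp [reduceElem, h, satElem]
  | negneg x => by_cases h : x ∈ I <;> simp [reduceElem, h, satElem]

lemma satBody_reduce_self (I : Finset ℕ) (B : Finset RuleElem) :
    satBody ↑I (B.image (reduceElem I)) ↔ satBody ↑I B := by
  constructor
  · intro h e he
    exact (satElem_reduce_self I e).mp (h _ (Finset.mem_image_of_mem _ he))
  · intro h e he
    obtain ⟨e₀, he₀, rfl⟩ := Finset.mem_image.mp he
    exact (satElem_reduce_self I e₀).mpr (h _ he₀)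

lemma satElem_reduce_mono (I : Finset ℕ) {J K : Set ℕ} (h : J ⊆ K) (e : RuleElem)
    (he : satElem J (reduceElem I e)) : satElem K (reduceElem I e) := by
  cases e with
  | top => trivial
  | bot => exact he
  | pos x => exact h he
  | neg x => by_cases hx : x ∈ I <;> simp [reduceElem, hx, satElem] at he ⊢
  | negneg x => by_cases hx : x ∈ I <;> simp [reduceElem, hx, satElem] at he ⊢

lemma satBody_mono_reduct {P : Program} {I : Finset ℕ} {r : Rule} (hr : r ∈ reduct P I)
    {J K : Set ℕ} (hJK : J ⊆ K) (h : satBody J r.body) : satBody K r.body := by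
  obtain ⟨r₀, _, rfl⟩ := Finset.mem_image.mp hr
  intro e he
  obtain ⟨e₀, he₀, rfl⟩ := Finset.mem_image.mp he
  exact satElem_reduce_mono I hJK e₀ (h _ he)

lemma Cn_subset_of_closed {P : Program} {J : Set ℕ} (h : closedUnder J P) : Cn P ⊆ J :=
  Set.sInter_subset_of_mem h

lemma mem_Cn {P : Program} {x : ℕ} : x ∈ Cn P ↔ ∀ J : Set ℕ, closedUnder J P → x ∈ J :=
  Set.mem_sInter

lemma closedUnder_Cn_reduct (P : Program) (I : Finset ℕ)
    (hex : ∃ J : Set ℕ, closedUnder J (reduct P I)) :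
    closedUnder (Cn (reduct P I)) (reduct P I) := by
  obtain ⟨J0, hJ0⟩ := hex
  intro r hr hb
  obtain ⟨x, hx, _⟩ := hJ0 r hr (satBody_mono_reduct hr (Cn_subset_of_closed hJ0) hb)
  refine ⟨x, hx, mem_Cn.mpr fun K hK => ?_⟩
  obtain ⟨y, hy, hyK⟩ := hK r hr (satBody_mono_reduct hr (Cn_subset_of_closed hK) hb)
  rw [hx] at hy
  exact (Option.some_injective _ hy) ▸ hyK

lemma head_mem_progVars {P : Program} {r : Rule} {x : ℕ} (hr : r ∈ P) (hh : r.head = some x) :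
    x ∈ progVars P := by
  refine Finset.mem_biUnion.mpr ⟨r, hr, ?_⟩
  unfold ruleVars
  rw [hh]
  simp

lemma pos_mem_progVars {P : Program} {r : Rule} {y : ℕ} (hr : r ∈ P)
    (hb : RuleElem.pos y ∈ r.body) : y ∈ progVars P := by
  refine Finset.mem_biUnion.mpr ⟨r, hr, ?_⟩
  refine Finset.mem_union_right _ (Finset.mem_biUnion.mpr ⟨_, hb, ?_⟩)
  simp [elemVars]

lemma depEdge_mem {P : Program} {x y : ℕ} (h : depEdge P x y) :
    x ∈ progVars P ∧ y ∈ progVars P := by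
  obtain ⟨r, hr, hh, hb⟩ := h
  exact ⟨head_mem_progVars hr hh, pos_mem_progVars hr hb⟩

lemma Cn_reduct_subset (V : Finset ℕ) (P : Program) (hV : progVars P ⊆ V) (I : Finset ℕ)
    {J : Set ℕ} (hJ : closedUnder J (reduct P I)) : Cn (reduct P I) ⊆ ↑V := by
  have hclosed : closedUnder (↑V ∩ J) (reduct P I) := by
    intro r hr hb
    obtain ⟨x, hx, hxJ⟩ := hJ r hr (satBody_mono_reduct hr Set.inter_subset_right hb)
    obtain ⟨r₀, hr₀, rfl⟩ := Finset.mem_image.mp hr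
    exact ⟨x, hx, ⟨hV (head_mem_progVars hr₀ hx), hxJ⟩⟩
  exact (Cn_subset_of_closed hclosed).trans Set.inter_subset_left

/-- paths between members of an SCC-like set stay within the set -/
lemma rtg_within {r : ℕ → ℕ → Prop} {x : ℕ} {S : Finset ℕ}
    (hS : ∀ w, Relation.ReflTransGen r x w → Relation.ReflTransGen r w x → w ∈ S) :
    ∀ a b, Relation.ReflTransGen r a b → Relation.ReflTransGen r x a →
      Relation.ReflTransGen r b x →
      Relation.ReflTransGen (fun u v => u ∈ S ∧ v ∈ S ∧ r u v) a b := by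
  intro a b hab
  induction hab using Relation.ReflTransGen.head_induction_on with
  | refl => intro _ _; exact Relation.ReflTransGen.refl
  | head h' hcb ih =>
    intro hxa hbx
    rename_i a c
    have haS : a ∈ S := hS a hxa ((Relation.ReflTransGen.head h' hcb).trans hbx)
    have hcS : c ∈ S := hS c (hxa.tail h') (hcb.trans hbx)
    exact Relation.ReflTransGen.head ⟨haS, hcS, h'⟩ (ih (hxa.tail h') hbx)

lemma no_transGen_self (P : Program) (hnoloop : ∀ U : Finset ℕ, ¬ isLoop P U) (x : ℕ) :
    ¬ Relation.TransGen (depEdge P) x x := by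
  classical
  intro htg
  by_cases hxx : depEdge P x x
  · exact hnoloop {x} ⟨⟨x, Finset.mem_singleton_self x⟩,
      by simpa using (depEdge_mem hxx).1, Or.inl ⟨x, rfl, hxx⟩⟩
  · obtain ⟨z, hxz, hzx⟩ := Relation.TransGen.head'_iff.mp htg
    have hzx' : z ≠ x := by rintro rfl; exact hxx hxz
    set S : Finset ℕ := (progVars P).filter
      (fun y => Relation.ReflTransGen (depEdge P) x y ∧ Relation.ReflTransGen (depEdge P) y x)
      with hSdef
    have hmemS : ∀ w, Relation.ReflTransGen (depEdge P) x w →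
        Relation.ReflTransGen (depEdge P) w x → w ∈ S := by
      intro w h1 h2
      refine Finset.mem_filter.mpr ⟨?_, h1, h2⟩
      rcases Relation.ReflTransGen.cases_tail h1 with heq | ⟨c, _, hcw⟩
      · exact heq ▸ (depEdge_mem hxz).1
      · exact (depEdge_mem hcw).2
    have hxS : x ∈ S := hmemS x Relation.ReflTransGen.refl Relation.ReflTransGen.refl
    have hzS : z ∈ S := hmemS z (Relation.ReflTransGen.single hxz) hzx
    refine hnoloop S ⟨⟨x, hxS⟩, Finset.filter_subset _ _, Or.inr ⟨?_, ?_⟩⟩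
    · exact Finset.one_lt_card.mpr ⟨z, hzS, x, hxS, hzx'⟩
    · intro a haS b hbS
      obtain ⟨_, hxa, hax⟩ := Finset.mem_filter.mp haS
      obtain ⟨_, hxb, hbx⟩ := Finset.mem_filter.mp hbS
      exact rtg_within hmemS a b (hax.trans hxb) hxa hbx

end Aux
/-- If a canonical program over a finite variable set `V` has no loops, then it is
equivalent to its completion: `Ans(P) = M(Comp(P))`. -/
theorem loop_free_completion_equivalent (V : Finset ℕ) (P : Program)
    (hV : progVars P ⊆ V) (hnoloop : ∀ U : Finset ℕ, ¬ isLoop P U) :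
    ∀ I : Finset ℕ, isAnswerSet P I ↔ I ∈ compModels V P := by
  classical
  intro I
  constructor
  · -- answer set → completion model
    intro hI
    unfold isAnswerSet at hI
    have hex : ∃ J : Set ℕ, closedUnder J (reduct P I) := by
      by_contra h
      push_neg at h
      have hemp : {J : Set ℕ | closedUnder J (reduct P I)} = ∅ :=
        Set.eq_empty_iff_forall_notMem.mpr h
      have huniv : Cn (reduct P I) = Set.univ := by
        unfold Cn; rw [hemp, Set.sInter_empty]
      obtain ⟨a, ha⟩ := Infinite.exists_notMem_finset I
      exact ha (by rw [← Finset.mem_coe, hI, huniv]; trivial)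
    have hCnclosed := closedUnder_Cn_reduct P I hex
    have hIclosed : closedUnder ↑I (reduct P I) := hI ▸ hCnclosed
    have hsubV := Cn_reduct_subset V P hV I hex.choose_spec
    refine ⟨?_, ?_, ?_⟩
    · intro a ha
      exact hsubV (by rw [← hI]; exact ha)
    · intro x hxV
      constructor
      · intro hxI
        by_contra h
        push_neg at h
        have hJclosed : closedUnder (↑I \ {x}) (reduct P I) := by
          intro r hr hb
          have hbI : satBody ↑I r.body :=
            satBody_mono_reduct hr Set.diff_subset hb
          obtain ⟨y, hy, hyI⟩ := hIclosed r hr hbI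
          refine ⟨y, hy, hyI, ?_⟩
          rintro rfl
          obtain ⟨r₀, hr₀, rfl⟩ := Finset.mem_image.mp hr
          exact h r₀ hr₀ hy ((satBody_reduce_self I r₀.body).mp hbI)
        have hxCn : x ∈ Cn (reduct P I) := by rw [← hI]; exact hxI
        exact ((Cn_subset_of_closed hJclosed) hxCn).2 rfl
      · rintro ⟨r₀, hr₀, hh, hb⟩
        have hr : (⟨r₀.head, r₀.body.image (reduceElem I)⟩ : Rule) ∈ reduct P I :=
          Finset.mem_image_of_mem _ hr₀
        obtain ⟨y, hy, hyI⟩ := hIclosed _ hr ((satBody_reduce_self I r₀.body).mpr hb)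
        have : some x = some y := hh ▸ hy
        exact (Option.some_injective _ this) ▸ hyI
    · intro r₀ hr₀ hh hb
      have hr : (⟨r₀.head, r₀.body.image (reduceElem I)⟩ : Rule) ∈ reduct P I :=
        Finset.mem_image_of_mem _ hr₀
      obtain ⟨y, hy, _⟩ := hIclosed _ hr ((satBody_reduce_self I r₀.body).mpr hb)
      simp [hh] at hy
  · -- completion model → answer set
    rintro ⟨hIV, hcomp, hbot⟩
    have hIclosed : closedUnder ↑I (reduct P I) := by
      intro r hr hb
      obtain ⟨r₀, hr₀, rfl⟩ := Finset.mem_image.mp hr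
      have hb0 := (satBody_reduce_self I r₀.body).mp hb
      cases hh : r₀.head with
      | none => exact absurd hb0 (hbot r₀ hr₀ hh)
      | some x =>
        exact ⟨x, rfl, (hcomp x (hV (head_mem_progVars hr₀ hh))).mpr ⟨r₀, hr₀, hh, hb0⟩⟩
    have hCnclosed := closedUnder_Cn_reduct P I ⟨↑I, hIclosed⟩
    set D : ℕ → Finset ℕ :=
      fun x => (progVars P).filter (fun y => Relation.TransGen (depEdge P) x y) with hD
    have hrank : ∀ x y, depEdge P x y → (D y).card < (D x).card := by
      intro x y hxy
      apply Finset.card_lt_card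
      constructor
      · intro z hz
        obtain ⟨hz1, hz2⟩ := Finset.mem_filter.mp hz
        exact Finset.mem_filter.mpr ⟨hz1, Relation.TransGen.head hxy hz2⟩
      · intro hsub
        have hy : y ∈ D x :=
          Finset.mem_filter.mpr ⟨(depEdge_mem hxy).2, Relation.TransGen.single hxy⟩
        exact no_transGen_self P hnoloop y (Finset.mem_filter.mp (hsub hy)).2
    have key : ∀ n x, (D x).card < n → x ∈ I → x ∈ Cn (reduct P I) := by
      intro n
      induction n with
      | zero => intro x h; omega
      | succ n ih =>
        intro x hcard hxI
        obtain ⟨r₀, hr₀, hh, hb⟩ := (hcomp x (hIV hxI)).mp hxI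
        have hbCn : satBody (Cn (reduct P I)) (r₀.body.image (reduceElem I)) := by
          intro e he
          obtain ⟨e₀, he₀, rfl⟩ := Finset.mem_image.mp he
          have hsat := hb _ he₀
          cases e₀ with
          | top => trivial
          | bot => exact hsat
          | pos y =>
            have hedge : depEdge P x y := ⟨r₀, hr₀, hh, he₀⟩
            exact ih y (by have := hrank x y hedge; omega) hsat
          | neg y =>
            have hy : y ∉ I := hsat
            simp [reduceElem, hy, satElem]
          | negneg y =>
            have hy : y ∈ I := hsat
            simp [reduceElem, hy, satElem]
        obtain ⟨z, hz, hzCn⟩ := hCnclosed _ (Finset.mem_image_of_mem _ hr₀) hbCn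
        rw [hh] at hz
        exact (Option.some_injective _ hz) ▸ hzCn
    unfold isAnswerSet
    apply Set.Subset.antisymm
    · intro a ha
      exact key ((D a).card + 1) a (by omega) ha
    · exact Cn_subset_of_closed hIclosed
end

section
/- Every PARITY_1 canonical program is equivalent to its completion: if Π is a canonical program with all its variables among {x_1} whose set of answer sets, as subsets of {x_1}, is exactly {{x_1}}, then Ans(Π) = M(Comp(Π)) (models taken as subsets of {x_1}). -/
section AuxParity

lemma satElem_reduce (I : Finset ℕ) (e : RuleElem) :
    satElem (↑I) (reduceElem I e) ↔ satElem (↑I) e := by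
  cases e with
  | neg x => by_cases h : x ∈ I <;> simp [reduceElem, h, satElem]
  | negneg x => by_cases h : x ∈ I <;> simp [reduceElem, h, satElem]
  | _ => exact Iff.rfl

lemma satBody_reduce (I : Finset ℕ) (B : Finset RuleElem) :
    satBody (↑I) (B.image (reduceElem I)) ↔ satBody (↑I) B := by
  constructor
  · intro h e he
    exact (satElem_reduce I e).1 (h _ (Finset.mem_image_of_mem _ he))
  · intro h e he
    obtain ⟨e', he', rfl⟩ := Finset.mem_image.1 he
    exact (satElem_reduce I e').2 (h _ he')

lemma satElem_mono (I : Finset ℕ) {J K : Set ℕ} (h : J ⊆ K) (e : RuleElem) :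
    satElem J (reduceElem I e) → satElem K (reduceElem I e) := by
  cases e with
  | pos x => exact fun hx => h hx
  | neg x => by_cases hx : x ∈ I <;> simp [reduceElem, hx, satElem]
  | negneg x => by_cases hx : x ∈ I <;> simp [reduceElem, hx, satElem]
  | top => exact fun _ => trivial
  | bot => exact fun hx => hx

lemma satBody_mono (I : Finset ℕ) {J K : Set ℕ} (h : J ⊆ K) (B : Finset RuleElem) :
    satBody J (B.image (reduceElem I)) → satBody K (B.image (reduceElem I)) := by
  intro hb e he
  obtain ⟨e', he', rfl⟩ := Finset.mem_image.1 he
  exact satElem_mono I h e' (hb _ (Finset.mem_image_of_mem _ he'))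

lemma Cn_subset {Q : Program} {J : Set ℕ} (hJ : closedUnder J Q) : Cn Q ⊆ J :=
  Set.sInter_subset_of_mem hJ

lemma mem_reduct {P : Program} {I : Finset ℕ} {r : Rule} (hr : r ∈ P) :
    (⟨r.head, r.body.image (reduceElem I)⟩ : Rule) ∈ reduct P I :=
  Finset.mem_image_of_mem _ hr

lemma reduct_body {P : Program} {I : Finset ℕ} {r : Rule} (hr : r ∈ reduct P I) :
    ∃ r' ∈ P, r.head = r'.head ∧ r.body = r'.body.image (reduceElem I) := by
  obtain ⟨r', hr', rfl⟩ := Finset.mem_image.1 hr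
  exact ⟨r', hr', rfl, rfl⟩

lemma closed_Cn_reduct (P : Program) (I : Finset ℕ) {J0 : Set ℕ}
    (h0 : closedUnder J0 (reduct P I)) :
    closedUnder (Cn (reduct P I)) (reduct P I) := by
  intro r hr hb
  obtain ⟨r', hr', hh, hbody⟩ := reduct_body hr
  obtain ⟨x, hx, -⟩ := h0 r hr (by
    rw [hbody] at hb ⊢
    exact satBody_mono I (Cn_subset h0) _ hb)
  refine ⟨x, hx, Set.mem_sInter.2 fun J hJ => ?_⟩
  obtain ⟨y, hy, hyJ⟩ := hJ r hr (by
    rw [hbody] at hb ⊢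
    exact satBody_mono I (Cn_subset hJ) _ hb)
  rw [hx] at hy
  exact (Option.some_injective _ hy) ▸ hyJ

end AuxParity

/-- Every PARITY_1 canonical program is equivalent to its completion
(models taken as subsets of `{x_1}`). -/
theorem parity1_completion_equivalent (P : Program) (hP : isParityProgram 1 P) :
    ∀ I : Finset ℕ, isAnswerSet P I ↔ I ∈ compModels (Finset.range 1) P := by
  intro I
  constructor
  · intro hI
    have hsub : I ⊆ Finset.range 1 := ((hP.2 I).1 hI).1
    have hCn : (↑I : Set ℕ) = Cn (reduct P I) := hI
    have hne : ∃ J : Set ℕ, closedUnder J (reduct P I) := by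
      by_contra h
      push_neg at h
      have hempty : {J : Set ℕ | closedUnder J (reduct P I)} = ∅ :=
        Set.eq_empty_iff_forall_notMem.2 h
      have : (↑I : Set ℕ) = Set.univ := by
        rw [hCn]; unfold Cn; rw [hempty, Set.sInter_empty]
      exact (Set.infinite_univ (α := ℕ)) (this ▸ I.finite_toSet)
    obtain ⟨J0, hJ0⟩ := hne
    have hIclosed : closedUnder (↑I) (reduct P I) := by
      rw [hCn]; exact closed_Cn_reduct P I hJ0
    refine ⟨hsub, ?_, ?_⟩
    · intro x hx
      constructor
      · intro hxI
        by_contra hno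
        push_neg at hno
        set J : Set ℕ := (↑I : Set ℕ) \ {x} with hJdef
        have hJclosed : closedUnder J (reduct P I) := by
          intro r hr hb
          obtain ⟨r', hr', hh, hbody⟩ := reduct_body hr
          have hbI : satBody (↑I) r.body := by
            rw [hbody] at hb ⊢
            exact satBody_mono I Set.diff_subset _ hb
          obtain ⟨y, hy, hyI⟩ := hIclosed r hr hbI
          by_cases hyx : y = x
          · exfalso
            subst hyx
            refine hno r' hr' (hh ▸ hy) ?_
            rw [hbody] at hbI
            exact (satBody_reduce I r'.body).1 hbI
          · exact ⟨y, hy, hyI, hyx⟩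
        have : x ∈ J := (hCn ▸ Cn_subset hJclosed) hxI
        exact this.2 rfl
      · rintro ⟨r, hr, hhead, hbody⟩
        obtain ⟨y, hy, hyI⟩ := hIclosed _ (mem_reduct (I := I) hr)
          ((satBody_reduce I r.body).2 hbody)
        simp only [hhead] at hy
        exact (Option.some_injective _ hy) ▸ hyI
    · intro r hr hhead hbody
      obtain ⟨y, hy, -⟩ := hIclosed _ (mem_reduct (I := I) hr)
        ((satBody_reduce I r.body).2 hbody)
      simp [hhead] at hy
  · rintro ⟨hsub, hiff, hconstr⟩
    have hsub' : I ⊆ {0} := by simpa [Finset.range_one] using hsub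
    rcases Finset.subset_singleton_iff.1 hsub' with rfl | rfl
    · -- I = ∅ : show it would be an answer set, contradicting oddness
      exfalso
      have hclosed : closedUnder (↑(∅ : Finset ℕ)) (reduct P ∅) := by
        intro r hr hb
        exfalso
        obtain ⟨r', hr', hh, hbody⟩ := reduct_body hr
        have hb' : satBody (↑(∅ : Finset ℕ)) r'.body := by
          rw [hbody] at hb
          exact (satBody_reduce ∅ r'.body).1 hb
        cases hhead : r'.head with
        | none => exact hconstr r' hr' hhead hb'
        | some x =>
          have hxvar : x ∈ progVars P := by
            apply Finset.mem_biUnion.2 ⟨r', hr', ?_⟩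
            apply Finset.mem_union_left
            simp [hhead]
          have hx0 : x = 0 := by
            have := hP.1 hxvar
            simpa [Finset.range_one] using this
          subst hx0
          have : (0 : ℕ) ∈ (∅ : Finset ℕ) :=
            (hiff 0 (by simp)).2 ⟨r', hr', hhead, hb'⟩
          simp at this
      have hans : isAnswerSet P ∅ := by
        unfold isAnswerSet
        apply Set.eq_of_subset_of_subset
        · simp
        · simpa using Cn_subset hclosed
      have := ((hP.2 ∅).1 hans).2
      simp at this
    · exact (hP.2 {0}).2 ⟨by simp, by simp⟩
end
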